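/- arXiv:1103.0506 — 2 statements merged into one kernel-verified Lean document; each statement's English description precedes it below -/
import Mathlib

section
/- Under the same smoothness assumptions, let ψ̃₂ solve dψ̃₂/dt = Ψ(ψ̃₂, φ_{1/2}) on [t₀, t₀+Δt] with ψ̃₂(t₀) = ψ₀, where φ_{1/2} = φ(t₀ + Δt/2) is the exact field at the midpoint. Then ψ(t₀+Δt) − ψ̃₂(t₀+Δt) = O(Δt³) as Δt → 0, i.e. the midpoint-frozen-field scheme is second-order accurate. -/
/-!
Write `Φ x y = Ψ x (Υ y)` and `m = t₀ + Δt / 2`. The error `e = ψ - ψ̃₂` satisfies `e' = A + B` with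
`A t = Φ (ψ t) (ψ t) - Φ (ψ t) (ψ m)` and `B t = Φ (ψ t) (ψ m) - Φ (ψ̃₂ t) (ψ m)`. For small `Δt`
both trajectories stay in a ball around `ψ₀` on which `Φ` is bounded and Lipschitz, so `e = O(Δt²)`
along the step and `∫ B = O(Δt³)`. The part of `A t` linear in `t - m` is odd about the midpoint and
integrates to zero, which leaves `∫ A = O(Δt³)`.
-/

open Set Metric Function MeasureTheory

theorem contDiff_succ_of_hasDerivAt_comp {E : Type*} [NormedAddCommGroup E] [NormedSpace ℝ E]
    {f : E → E} {α : ℝ → E} (hα : ∀ t, HasDerivAt α (f (α t)) t) {n : ℕ}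
    (hf : ContDiff ℝ n f) : ContDiff ℝ (n + 1) α := by
  have hderiv : deriv α = f ∘ α := funext fun t => (hα t).deriv
  have hdiff : Differentiable ℝ α := fun t => (hα t).differentiableAt
  induction n with
  | zero =>
    refine contDiff_one_iff_deriv.2 ⟨hdiff, ?_⟩
    rw [hderiv]
    exact (contDiff_zero.1 hf).comp hdiff.continuous
  | succ n ih =>
    refine contDiff_succ_iff_deriv.2 ⟨hdiff, by simp, ?_⟩
    rw [hderiv]
    exact_mod_cast hf.comp (ih hf.of_succ)

theorem norm_image_sub_le_of_norm_deriv_lt_on_closedBall {E : Type*} [NormedAddCommGroup E]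
    [NormedSpace ℝ E] {f f' : ℝ → E} {a b r M : ℝ} (hf : ContinuousOn f (Icc a b))
    (hf' : ∀ t ∈ Ico a b, HasDerivWithinAt f (f' t) (Ici t) t)
    (hM : ∀ t ∈ Ico a b, ‖f t - f a‖ ≤ r → ‖f' t‖ < M) (hM₀ : 0 ≤ M) (hr : M * (b - a) ≤ r) :
    ∀ t ∈ Icc a b, ‖f t - f a‖ ≤ M * (t - a) :=
  image_norm_le_of_norm_deriv_right_lt_deriv_boundary (f := fun t => f t - f a)
    (hf.sub continuousOn_const) (fun t ht => (hf' t ht).sub_const (f a)) (by simp)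
    (fun t => by simpa using ((hasDerivAt_id t).sub_const a).const_mul M)
    fun t ht heq => hM t ht <| heq.trans_le <| hr.trans' <|
      mul_le_mul_of_nonneg_left (by linarith [ht.2]) hM₀

section Quadrature

variable {F : Type*} [NormedAddCommGroup F] [NormedSpace ℝ F]

theorem norm_integral_le_of_norm_sub_smul_le [CompleteSpace F] {f : ℝ → F} {a b ε : ℝ} (v : F)
    (hf : IntervalIntegrable f volume a b)
    (h : ∀ t ∈ uIoc a b, ‖f t - (t - (a + b) / 2) • v‖ ≤ ε) :
    ‖∫ t in a..b, f t‖ ≤ ε * |b - a| := by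
  have hlin : ∫ t in a..b, (t - (a + b) / 2) • v = 0 := by
    rw [intervalIntegral.integral_smul_const,
      intervalIntegral.integral_sub intervalIntegral.intervalIntegrable_id intervalIntegrable_const,
      integral_id, intervalIntegral.integral_const, smul_eq_mul]
    ring_nf
    simp
  have hlinInt : IntervalIntegrable (fun t => (t - (a + b) / 2) • v) volume a b :=
    ((continuous_id.sub continuous_const).smul continuous_const).intervalIntegrable _ _
  calc ‖∫ t in a..b, f t‖ = ‖∫ t in a..b, (f t - (t - (a + b) / 2) • v)‖ := by
        rw [intervalIntegral.integral_sub hf hlinInt, hlin, sub_zero]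
    _ ≤ ε * |b - a| := intervalIntegral.norm_integral_le_of_norm_le_const h

theorem norm_sub_sub_smul_le_of_norm_deriv_sub_le {g g' : ℝ → F} {x y ε : ℝ} {v : F}
    (hg : ∀ s ∈ uIcc x y, HasDerivAt g (g' s) s) (hε : ∀ s ∈ uIcc x y, ‖g' s - v‖ ≤ ε) :
    ‖g y - g x - (y - x) • v‖ ≤ ε * |y - x| := by
  have := (convex_uIcc x y).norm_image_sub_le_of_norm_hasDerivWithin_le
    (fun s hs => ((hg s hs).sub (by simpa using (hasDerivAt_id s).smul_const v)).hasDerivWithinAt)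
    hε left_mem_uIcc right_mem_uIcc
  rw [Real.norm_eq_abs] at this
  calc ‖g y - g x - (y - x) • v‖ = ‖g y - y • v - (g x - x • v)‖ := by rw [sub_smul]; abel_nf
    _ ≤ ε * |y - x| := this

theorem exists_norm_integral_sub_midpoint_le [CompleteSpace F] {a : ℝ × ℝ → F}
    (ha : ContDiff ℝ 2 a) (α β : ℝ) :
    ∃ K : ℝ, ∀ t₀ Δ, 0 ≤ Δ → α ≤ t₀ → t₀ + Δ ≤ β →
      ‖∫ t in t₀..t₀ + Δ, (a (t, t) - a (t, t₀ + Δ / 2))‖ ≤ K * Δ ^ 3 := by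
  set p : ℝ × ℝ → F := fun z => fderiv ℝ a z (0, 1)
  have hp : ContDiff ℝ 1 p := (ha.fderiv_right (by norm_num)).clm_apply contDiff_const
  obtain ⟨K, hK⟩ := hp.contDiffOn.exists_lipschitzOnWith one_ne_zero
    ((convex_Icc α β).prod (convex_Icc α β)) (isCompact_Icc.prod isCompact_Icc)
  refine ⟨K, fun t₀ Δ hΔ hα hβ => ?_⟩
  set m := t₀ + Δ / 2 with hm_def
  have hI : ∀ t ∈ Icc t₀ (t₀ + Δ), t ∈ Icc α β ∧ |t - m| ≤ Δ := fun t ht =>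
    ⟨⟨hα.trans ht.1, ht.2.trans hβ⟩, abs_le.2 ⟨by linarith [ht.1], by linarith [ht.2]⟩⟩
  have hm : m ∈ Icc t₀ (t₀ + Δ) := ⟨by linarith, by linarith⟩
  have hpoint : ∀ t ∈ Icc t₀ (t₀ + Δ),
      ‖a (t, t) - a (t, m) - (t - m) • p (m, m)‖ ≤ K * Δ * Δ := by
    intro t ht
    refine (norm_sub_sub_smul_le_of_norm_deriv_sub_le (g := fun s => a (t, s)) (ε := K * Δ)
      (fun s _ => ((ha.differentiable (by norm_num)) _).hasFDerivAt.comp_hasDerivAt s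
        ((hasDerivAt_const s t).prodMk (hasDerivAt_id s))) fun s hs => ?_).trans ?_
    · have hs' : s ∈ Icc t₀ (t₀ + Δ) := uIcc_subset_Icc hm ht hs
      rw [← dist_eq_norm]
      refine (hK.dist_le_mul _ ⟨(hI t ht).1, (hI s hs').1⟩ _ ⟨(hI m hm).1, (hI m hm).1⟩).trans ?_
      gcongr
      rw [Prod.dist_eq, Real.dist_eq, Real.dist_eq]
      exact max_le (hI t ht).2 (hI s hs').2
    · gcongr
      exact (hI t ht).2
  have hint : IntervalIntegrable (fun t => a (t, t) - a (t, m)) volume t₀ (t₀ + Δ) :=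
    ((ha.continuous.comp (continuous_id.prodMk continuous_id)).sub
      (ha.continuous.comp (continuous_id.prodMk continuous_const))).intervalIntegrable _ _
  have hmid : (t₀ + (t₀ + Δ)) / 2 = m := by ring
  calc ‖∫ t in t₀..t₀ + Δ, (a (t, t) - a (t, m))‖ ≤ K * Δ * Δ * |t₀ + Δ - t₀| :=
        norm_integral_le_of_norm_sub_smul_le (p (m, m)) hint fun t ht => by
          rw [uIoc_of_le (by linarith)] at ht
          rw [hmid]; exact hpoint t (Ioc_subset_Icc_self ht)
    _ = K * Δ ^ 3 := by rw [add_sub_cancel_left, abs_of_nonneg hΔ]; ring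

end Quadrature

section FrozenField

variable {E : Type*} [NormedAddCommGroup E] [NormedSpace ℝ E] {Φ : E → E → E} {ψ ψt : ℝ → E}
  {t₀ Δt M : ℝ} {L : NNReal}

theorem norm_sub_initial_le_of_frozen_field (hψ : ∀ t, HasDerivAt ψ (Φ (ψ t) (ψ t)) t)
    (hψt : ∀ t, HasDerivAt ψt (Φ (ψt t) (ψ (t₀ + Δt / 2))) t) (hψt0 : ψt t₀ = ψ t₀)
    (hM : ∀ x ∈ closedBall (ψ t₀) 1, ∀ y ∈ closedBall (ψ t₀) 1, ‖Φ x y‖ < M) (hM₀ : 0 ≤ M)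
    (hΔt : 0 ≤ Δt) (hMΔt : M * Δt ≤ 1) :
    ∀ t ∈ Icc t₀ (t₀ + Δt), ‖ψ t - ψ t₀‖ ≤ M * Δt ∧ ‖ψt t - ψ t₀‖ ≤ M * Δt := by
  have hstay : ∀ {f v : ℝ → E}, (∀ t, HasDerivAt f (v t) t) →
      (∀ s ∈ Ico t₀ (t₀ + Δt), ‖f s - f t₀‖ ≤ 1 → ‖v s‖ < M) →
      ∀ s ∈ Icc t₀ (t₀ + Δt), ‖f s - f t₀‖ ≤ M * Δt := fun hf hv s hs =>
    (norm_image_sub_le_of_norm_deriv_lt_on_closedBall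
      (fun s _ => (hf s).continuousAt.continuousWithinAt) (fun s _ => (hf s).hasDerivWithinAt)
      hv hM₀ (by simpa using hMΔt) s hs).trans (by gcongr; linarith [hs.2])
  have hψball := hstay hψ fun s _ hs =>
    hM _ (mem_closedBall_iff_norm.2 hs) _ (mem_closedBall_iff_norm.2 hs)
  have hmid : ψ (t₀ + Δt / 2) ∈ closedBall (ψ t₀) 1 :=
    mem_closedBall_iff_norm.2 <| (hψball _ ⟨by linarith, by linarith⟩).trans hMΔt
  refine fun t ht => ⟨hψball t ht, ?_⟩
  rw [← hψt0]
  exact hstay hψt (fun s _ hs => hM _ (mem_closedBall_iff_norm.2 (hψt0 ▸ hs)) _ hmid) t ht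

theorem norm_sub_frozen_solution_le (hψ : ∀ t, HasDerivAt ψ (Φ (ψ t) (ψ t)) t)
    (hψt : ∀ t, HasDerivAt ψt (Φ (ψt t) (ψ (t₀ + Δt / 2))) t) (hψt0 : ψt t₀ = ψ t₀)
    (hM : ∀ x ∈ closedBall (ψ t₀) 1, ∀ y ∈ closedBall (ψ t₀) 1, ‖Φ x y‖ < M) (hM₀ : 0 ≤ M)
    (hL : LipschitzOnWith L (uncurry Φ) (closedBall (ψ t₀) 1 ×ˢ closedBall (ψ t₀) 1))
    (hΔt : 0 ≤ Δt) (hMΔt : M * Δt ≤ 1) :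
    ∀ t ∈ Icc t₀ (t₀ + Δt), ‖ψ t - ψt t‖ ≤ 2 * L * M * Δt ^ 2 := by
  have hnear := norm_sub_initial_le_of_frozen_field hψ hψt hψt0 hM hM₀ hΔt hMΔt
  have hball : ∀ {x}, ‖x - ψ t₀‖ ≤ M * Δt → x ∈ closedBall (ψ t₀) 1 := fun hx =>
    mem_closedBall_iff_norm.2 (hx.trans hMΔt)
  have hdist : ∀ {x y}, ‖x - ψ t₀‖ ≤ M * Δt → ‖y - ψ t₀‖ ≤ M * Δt → dist x y ≤ 2 * M * Δt :=
    fun hx hy =>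
      (dist_triangle_right _ _ (ψ t₀)).trans (by rw [dist_eq_norm, dist_eq_norm]; linarith)
  have hm : t₀ + Δt / 2 ∈ Icc t₀ (t₀ + Δt) := ⟨by linarith, by linarith⟩
  have hderiv : ∀ s ∈ Ico t₀ (t₀ + Δt),
      ‖Φ (ψ s) (ψ s) - Φ (ψt s) (ψ (t₀ + Δt / 2))‖ ≤ L * (2 * M * Δt) := by
    intro s hs
    obtain ⟨hψs, hψts⟩ := hnear s (Ico_subset_Icc_self hs)
    rw [← dist_eq_norm]
    refine (hL.dist_le_mul (ψ s, ψ s) ⟨hball hψs, hball hψs⟩ (ψt s, ψ (t₀ + Δt / 2))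
      ⟨hball hψts, hball (hnear _ hm).1⟩).trans ?_
    gcongr
    exact max_le (hdist hψs hψts) (hdist hψs (hnear _ hm).1)
  intro t ht
  have := norm_image_sub_le_of_norm_deriv_le_segment'
    (fun s _ => ((hψ s).sub (hψt s)).hasDerivWithinAt) hderiv t ht
  rw [Pi.sub_apply, Pi.sub_apply, hψt0, sub_self, sub_zero] at this
  calc ‖ψ t - ψt t‖ ≤ L * (2 * M * Δt) * (t - t₀) := this
    _ ≤ L * (2 * M * Δt) * Δt := by gcongr; linarith [ht.2]
    _ = 2 * L * M * Δt ^ 2 := by ring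

theorem norm_sub_frozen_solution_endpoint_le [CompleteSpace E] (hΦ : Continuous (uncurry Φ))
    (hψ : ∀ t, HasDerivAt ψ (Φ (ψ t) (ψ t)) t)
    (hψt : ∀ t, HasDerivAt ψt (Φ (ψt t) (ψ (t₀ + Δt / 2))) t) (hψt0 : ψt t₀ = ψ t₀)
    (hM : ∀ x ∈ closedBall (ψ t₀) 1, ∀ y ∈ closedBall (ψ t₀) 1, ‖Φ x y‖ < M) (hM₀ : 0 ≤ M)
    (hL : LipschitzOnWith L (uncurry Φ) (closedBall (ψ t₀) 1 ×ˢ closedBall (ψ t₀) 1))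
    (hΔt : 0 ≤ Δt) (hMΔt : M * Δt ≤ 1) {K : ℝ}
    (hK : ‖∫ t in t₀..t₀ + Δt, (Φ (ψ t) (ψ t) - Φ (ψ t) (ψ (t₀ + Δt / 2)))‖ ≤ K * Δt ^ 3) :
    ‖ψ (t₀ + Δt) - ψt (t₀ + Δt)‖ ≤ (K + 2 * L ^ 2 * M) * Δt ^ 3 := by
  set m := t₀ + Δt / 2 with hm_def
  have hnear := norm_sub_initial_le_of_frozen_field hψ hψt hψt0 hM hM₀ hΔt hMΔt
  have herr := norm_sub_frozen_solution_le hψ hψt hψt0 hM hM₀ hL hΔt hMΔt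
  have hball : ∀ {x}, ‖x - ψ t₀‖ ≤ M * Δt → x ∈ closedBall (ψ t₀) 1 := fun hx =>
    mem_closedBall_iff_norm.2 (hx.trans hMΔt)
  have hψm : ψ m ∈ closedBall (ψ t₀) 1 := hball (hnear m ⟨by linarith, by linarith⟩).1
  have hψc : Continuous ψ := continuous_iff_continuousAt.2 fun t => (hψ t).continuousAt
  have hψtc : Continuous ψt := continuous_iff_continuousAt.2 fun t => (hψt t).continuousAt
  set A : ℝ → E := fun t => Φ (ψ t) (ψ t) - Φ (ψ t) (ψ m)
  set B : ℝ → E := fun t => Φ (ψ t) (ψ m) - Φ (ψt t) (ψ m)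
  have hAint : IntervalIntegrable A volume t₀ (t₀ + Δt) :=
    ((hΦ.comp (hψc.prodMk hψc)).sub
      (hΦ.comp (hψc.prodMk continuous_const))).intervalIntegrable _ _
  have hBint : IntervalIntegrable B volume t₀ (t₀ + Δt) :=
    ((hΦ.comp (hψc.prodMk continuous_const)).sub
      (hΦ.comp (hψtc.prodMk continuous_const))).intervalIntegrable _ _
  have hrepr :
      ψ (t₀ + Δt) - ψt (t₀ + Δt) = (∫ t in t₀..t₀ + Δt, A t) + ∫ t in t₀..t₀ + Δt, B t := by
    rw [← intervalIntegral.integral_add hAint hBint,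
      intervalIntegral.integral_eq_sub_of_hasDerivAt (f := ψ - ψt)
        (fun t _ => ((hψ t).sub (hψt t)).congr_deriv (sub_add_sub_cancel _ _ _).symm)
        (hAint.add hBint)]
    simp [hψt0]
  have hB : ∀ t ∈ uIoc t₀ (t₀ + Δt), ‖B t‖ ≤ L * (2 * L * M * Δt ^ 2) := by
    intro t ht
    rw [uIoc_of_le (by linarith)] at ht
    obtain ⟨hψt', hψtt⟩ := hnear t (Ioc_subset_Icc_self ht)
    rw [← dist_eq_norm]
    refine (hL.dist_le_mul (ψ t, ψ m) ⟨hball hψt', hψm⟩ (ψt t, ψ m) ⟨hball hψtt, hψm⟩).trans ?_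
    gcongr
    simpa [Prod.dist_eq, dist_eq_norm] using herr t (Ioc_subset_Icc_self ht)
  calc ‖ψ (t₀ + Δt) - ψt (t₀ + Δt)‖
      ≤ ‖∫ t in t₀..t₀ + Δt, A t‖ + ‖∫ t in t₀..t₀ + Δt, B t‖ := hrepr ▸ norm_add_le _ _
    _ ≤ K * Δt ^ 3 + L * (2 * L * M * Δt ^ 2) * |t₀ + Δt - t₀| :=
      add_le_add hK (intervalIntegral.norm_integral_le_of_norm_le_const hB)
    _ = (K + 2 * L ^ 2 * M) * Δt ^ 3 := by rw [add_sub_cancel_left, abs_of_nonneg hΔt]; ring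

end FrozenField

theorem exists_norm_sub_frozen_midpoint_solution_le {E : Type*} [NormedAddCommGroup E]
    [NormedSpace ℝ E] [FiniteDimensional ℝ E] {Φ : E → E → E} (hΦ : ContDiff ℝ 2 (uncurry Φ))
    {ψ : ℝ → E} {ψt : ℝ → ℝ → E} {t₀ : ℝ} (hψ : ∀ t, HasDerivAt ψ (Φ (ψ t) (ψ t)) t)
    (hψt : ∀ Δt t, HasDerivAt (ψt Δt) (Φ (ψt Δt t) (ψ (t₀ + Δt / 2))) t)
    (hψt0 : ∀ Δt, ψt Δt t₀ = ψ t₀) :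
    ∃ C > 0, ∃ δ > 0, ∀ Δt ∈ Ioo (0 : ℝ) δ, ‖ψ (t₀ + Δt) - ψt Δt (t₀ + Δt)‖ ≤ C * Δt ^ 3 := by
  have hψ2 : ContDiff ℝ 2 ψ :=
    (contDiff_succ_of_hasDerivAt_comp hψ (hΦ.comp (contDiff_id.prodMk contDiff_id))).of_le
      (by norm_num)
  obtain ⟨K, hK⟩ := exists_norm_integral_sub_midpoint_le (a := fun z => Φ (ψ z.1) (ψ z.2))
    (hΦ.comp ((hψ2.comp contDiff_fst).prodMk (hψ2.comp contDiff_snd))) t₀ (t₀ + 1)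
  set P := closedBall (ψ t₀) 1 ×ˢ closedBall (ψ t₀) 1
  have hP : IsCompact P := (isCompact_closedBall _ _).prod (isCompact_closedBall _ _)
  obtain ⟨L, hL⟩ := hΦ.contDiffOn.exists_lipschitzOnWith two_ne_zero
    ((convex_closedBall _ _).prod (convex_closedBall _ _)) hP
  obtain ⟨M₀, hM₀⟩ := hP.exists_bound_of_continuousOn hΦ.continuous.continuousOn
  set M := max M₀ 0 + 1
  have hM : ∀ x ∈ closedBall (ψ t₀) 1, ∀ y ∈ closedBall (ψ t₀) 1, ‖Φ x y‖ < M := fun x hx y hy =>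
    (hM₀ (x, y) ⟨hx, hy⟩).trans_lt (by simp only [M]; linarith [le_max_left M₀ 0])
  have hMpos : 0 < M := by positivity
  refine ⟨|K| + 2 * L ^ 2 * M + 1, by positivity, min 1 M⁻¹, by positivity, fun Δt hΔt => ?_⟩
  have hΔt1 : Δt ≤ 1 := hΔt.2.le.trans (min_le_left _ _)
  have hMΔt : M * Δt ≤ 1 :=
    calc M * Δt ≤ M * M⁻¹ := by gcongr; exact hΔt.2.le.trans (min_le_right _ _)
      _ = 1 := mul_inv_cancel₀ hMpos.ne'
  calc ‖ψ (t₀ + Δt) - ψt Δt (t₀ + Δt)‖ ≤ (K + 2 * L ^ 2 * M) * Δt ^ 3 :=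
        norm_sub_frozen_solution_endpoint_le hΦ.continuous hψ (hψt Δt) (hψt0 Δt) hM hMpos.le hL
          hΔt.1.le hMΔt (hK t₀ Δt hΔt.1.le le_rfl (by linarith))
    _ ≤ (|K| + 2 * L ^ 2 * M + 1) * Δt ^ 3 :=
        mul_le_mul_of_nonneg_right (by linarith [le_abs_self K]) (pow_nonneg hΔt.1.le 3)

/-- Second-order accuracy of the midpoint-frozen-field scheme: if `ψ` solves
`dψ/dt = Ψ(ψ, Υ(ψ))` with `ψ(t₀) = ψ₀` and, for each step `Δt`, `ψ̃₂ Δt` solves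
`dψ̃₂/dt = Ψ(ψ̃₂, φ_{1/2})` with `φ_{1/2} = Υ(ψ(t₀+Δt/2))` and `ψ̃₂ Δt t₀ = ψ₀`,
then `ψ(t₀+Δt) − ψ̃₂(t₀+Δt) = O(Δt³)` as `Δt → 0`. -/
theorem midpoint_frozen_field_second_order
    {n m : ℕ}
    (Ψ : (Fin n → ℝ) → (Fin m → ℝ) → (Fin n → ℝ))
    (Υ : (Fin n → ℝ) → (Fin m → ℝ))
    (hΨ : ContDiff ℝ 3 (Function.uncurry Ψ))
    (hΥ : ContDiff ℝ 3 Υ)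
    (ψ : ℝ → (Fin n → ℝ)) (ψt2 : ℝ → ℝ → (Fin n → ℝ))
    (t₀ : ℝ) (ψ₀ : Fin n → ℝ)
    (hψ : ∀ t, HasDerivAt ψ (Ψ (ψ t) (Υ (ψ t))) t)
    (hψ0 : ψ t₀ = ψ₀)
    (hψt2 : ∀ Δt t, HasDerivAt (ψt2 Δt) (Ψ (ψt2 Δt t) (Υ (ψ (t₀ + Δt / 2)))) t)
    (hψt20 : ∀ Δt, ψt2 Δt t₀ = ψ₀) :
    ∃ C > 0, ∃ δ > 0, ∀ Δt ∈ Set.Ioo (0:ℝ) δ,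
      ‖ψ (t₀ + Δt) - ψt2 Δt (t₀ + Δt)‖ ≤ C * Δt ^ 3 := by
  subst hψ0
  exact exists_norm_sub_frozen_midpoint_solution_le (Φ := fun x y => Ψ x (Υ y))
    ((hΨ.comp (contDiff_fst.prodMk (hΥ.comp contDiff_snd))).of_le (by norm_num)) hψ hψt2 hψt20
end

section
/- Under the same smoothness assumptions, if φ_{1/2} in the midpoint-frozen-field scheme is replaced by φ̃_{1/2} = Υ(ψ̃₁(t₀+Δt/2)), where ψ̃₁ is the first-order frozen-field approximation at the half step, then the resulting approximation ψ̃₂ still satisfies ψ(t₀+Δt) − ψ̃₂(t₀+Δt) = O(Δt³). In particular, since ψ̃₁(t₀+Δt/2) − ψ(t₀+Δt/2) = O(Δt²) and Υ is Lipschitz, the O(Δt²) error in the midpoint field induces only an O(Δt³) error in ψ̃₂. -/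
/-!
Write the field as `G (x, w) = Ψ x (Υ w)`, so that the exact flow is `ψ' = G (ψ, ψ)` while both
schemes freeze the second argument: at `ψ₀` for `ψ̃₁`, at `w = ψ̃₁ (t₀ + Δt / 2)` for `ψ̃₂`.
For small `Δt` every trajectory stays in a ball of radius `O(Δt)` around `ψ₀`, on which `G` and
`DG` are Lipschitz, so the two frozen-field errors `ψ − ψ̃₁`, `ψ − ψ̃₂` are `O(Δt²)` on the step.
Linearising `G` at `(ψ₀, ψ₀)` then gives `ψ(T) − ψ̃₂(T) = B ∫ (ψ − w) + O(Δt³)` with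
`B = ∂_w G (ψ₀, ψ₀)`, and `∫ (ψ − w) = (∫ ψ − Δt ψ(m)) + Δt (ψ(m) − w)` for the midpoint `m`:
the first term is the error of the midpoint rule, `O(Δt³)`, the second is `Δt` times the
first-order error at the half step.
-/

open Set Metric
open scoped NNReal

section

variable {E : Type*} [NormedAddCommGroup E] [NormedSpace ℝ E]

theorem norm_sub_le_mul_of_norm_deriv_lt {y y' : ℝ → E} {a b r M : ℝ} (hr : 0 ≤ r)
    (hMr : M * (b - a) ≤ r) (hy : ∀ t ∈ Icc a b, HasDerivWithinAt y (y' t) (Icc a b) t)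
    (hbound : ∀ t ∈ Ico a b, ‖y t - y a‖ ≤ r → ‖y' t‖ < M) :
    ∀ t ∈ Icc a b, ‖y t - y a‖ ≤ M * (t - a) := by
  refine image_norm_le_of_norm_deriv_right_lt_deriv_boundary' (f := fun t => y t - y a)
    (B' := fun _ => M) (fun t ht => (hy t ht).continuousWithinAt.sub continuousWithinAt_const)
    (fun t ht => ((hy t (Ico_subset_Icc_self ht)).mono_of_mem_nhdsWithin
      (Icc_mem_nhdsGE_of_mem ht)).sub_const _) (by simp) (by fun_prop)
    (fun t _ => by simpa using (((hasDerivAt_id t).sub_const a).const_mul M).hasDerivWithinAt)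
    fun t ht heq => hbound t ht ?_
  rw [heq]
  rcases le_total 0 M with hM | hM <;> nlinarith [ht.1, ht.2]

theorem norm_sub_le_of_hasDerivWithinAt_comp_lipschitzOnWith {F : Type*} [PseudoMetricSpace F]
    {G : F → E} {S : Set F} {K : ℝ≥0} (hG : LipschitzOnWith K G S) {x y : ℝ → E} {p q : ℝ → F}
    {a b ρ : ℝ} (hx : ∀ t ∈ Icc a b, HasDerivWithinAt x (G (p t)) (Icc a b) t)
    (hy : ∀ t ∈ Icc a b, HasDerivWithinAt y (G (q t)) (Icc a b) t) (h₀ : x a = y a)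
    (hp : ∀ t ∈ Ico a b, p t ∈ S) (hq : ∀ t ∈ Ico a b, q t ∈ S)
    (hpq : ∀ t ∈ Ico a b, dist (p t) (q t) ≤ ρ) :
    ∀ t ∈ Icc a b, ‖x t - y t‖ ≤ K * ρ * (t - a) := by
  intro t ht
  have := norm_image_sub_le_of_norm_deriv_le_segment' (fun t ht => (hx t ht).sub (hy t ht))
    (fun t ht => by
      rw [← dist_eq_norm]
      exact (hG.dist_le_mul _ (hp t ht) _ (hq t ht)).trans
        (mul_le_mul_of_nonneg_left (hpq t ht) K.2)) t ht
  simpa [h₀] using this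

theorem norm_integral_sub_smul_midpoint_le [CompleteSpace E] {u u' : ℝ → E} {a b : ℝ} {K : ℝ≥0}
    (hab : a ≤ b) (hu : ∀ t ∈ Icc a b, HasDerivWithinAt u (u' t) (Icc a b) t)
    (hK : LipschitzOnWith K u' (Icc a b)) :
    ‖(∫ t in a..b, u t) - (b - a) • u ((a + b) / 2)‖ ≤ K * (b - a) ^ 3 / 4 := by
  set m := (a + b) / 2 with hm_def
  have hm : m ∈ Icc a b := ⟨by linarith, by linarith⟩
  have hdist : ∀ t ∈ Icc a b, ‖t - m‖ ≤ (b - a) / 2 := fun t ht => by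
    rw [Real.norm_eq_abs, abs_le]; constructor <;> linarith [ht.1, ht.2]
  have htaylor : ∀ t ∈ Icc a b, ‖u t - u m - (t - m) • u' m‖ ≤ K * (b - a) ^ 2 / 4 := by
    intro t ht
    have hder : ∀ τ ∈ Icc a b, HasDerivWithinAt (fun τ => u τ - (τ - m) • u' m)
        (u' τ - u' m) (Icc a b) τ := fun τ hτ =>
      ((hu τ hτ).sub (((hasDerivAt_id τ).sub_const m).smul_const (u' m)).hasDerivWithinAt
        |>.congr_deriv (by simp))
    have := (convex_Icc a b).norm_image_sub_le_of_norm_hasDerivWithin_le hder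
      (fun τ hτ => (hK.norm_sub_le hτ hm).trans
        (mul_le_mul_of_nonneg_left (hdist τ hτ) K.2)) hm ht
    calc ‖u t - u m - (t - m) • u' m‖ = ‖(u t - (t - m) • u' m) - (u m - (m - m) • u' m)‖ := by
          rw [sub_self, zero_smul, sub_zero, sub_right_comm]
      _ ≤ K * ((b - a) / 2) * ‖t - m‖ := this
      _ ≤ K * ((b - a) / 2) * ((b - a) / 2) := by
          gcongr; exact hdist t ht
      _ = K * (b - a) ^ 2 / 4 := by ring
  have hint : IntervalIntegrable u MeasureTheory.volume a b :=
    ContinuousOn.intervalIntegrable fun t ht =>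
      (hu t (by rwa [uIcc_of_le hab] at ht)).continuousWithinAt.mono (by rw [uIcc_of_le hab])
  have hlin : ∫ t in a..b, (t - m) • u' m = 0 := by
    rw [intervalIntegral.integral_smul_const, intervalIntegral.integral_comp_sub_right
      (fun t => t), integral_id, show (b - m) ^ 2 - (a - m) ^ 2 = 0 by rw [hm_def]; ring,
      zero_div, zero_smul]
  have hsplit : (∫ t in a..b, u t) - (b - a) • u m
      = ∫ t in a..b, (u t - u m - (t - m) • u' m) := by
    have hlinint : IntervalIntegrable (fun t => (t - m) • u' m) MeasureTheory.volume a b :=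
      (continuous_id.sub continuous_const).smul continuous_const |>.intervalIntegrable _ _
    rw [intervalIntegral.integral_sub (hint.sub intervalIntegrable_const) hlinint, hlin,
      intervalIntegral.integral_sub hint intervalIntegrable_const, intervalIntegral.integral_const]
    simp
  rw [hsplit]
  calc _ ≤ K * (b - a) ^ 2 / 4 * |b - a| :=
        intervalIntegral.norm_integral_le_of_norm_le_const fun t ht =>
          htaylor t (by rw [uIoc_of_le hab] at ht; exact Ioc_subset_Icc_self ht)
    _ = K * (b - a) ^ 3 / 4 := by rw [abs_of_nonneg (sub_nonneg.2 hab)]; ring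

theorem sub_eq_integral_sub_add_clm_integral [CompleteSpace E] {x y f g : ℝ → E} {a b : ℝ}
    (B : E →L[ℝ] E) (w : E) (hx : ∀ t, HasDerivAt x (f t) t) (hy : ∀ t, HasDerivAt y (g t) t)
    (hf : Continuous f) (hg : Continuous g) (h₀ : x a = y a) :
    x b - y b
      = (∫ t in a..b, (f t - g t - B (x t - w))) + B ((∫ t in a..b, x t) - (b - a) • w) := by
  have hxc : Continuous x := continuous_iff_continuousAt.2 fun t => (hx t).continuousAt
  have hxw : IntervalIntegrable (fun t => x t - w) MeasureTheory.volume a b :=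
    (hxc.sub continuous_const).intervalIntegrable _ _
  have hrest : IntervalIntegrable (fun t => f t - g t - B (x t - w)) MeasureTheory.volume a b :=
    (by fun_prop : Continuous _).intervalIntegrable _ _
  have hBxw : IntervalIntegrable (fun t => B (x t - w)) MeasureTheory.volume a b :=
    (by fun_prop : Continuous _).intervalIntegrable _ _
  rw [← intervalIntegral.integral_const, ← intervalIntegral.integral_sub
    (hxc.intervalIntegrable _ _) intervalIntegrable_const, ← B.intervalIntegral_comp_comm hxw,
    ← intervalIntegral.integral_add hrest hBxw]
  simp only [sub_add_cancel]
  rw [intervalIntegral.integral_eq_sub_of_hasDerivAt (fun t _ => (hx t).sub (hy t))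
    ((hf.sub hg).intervalIntegrable _ _), Pi.sub_apply, Pi.sub_apply, h₀, sub_self, sub_zero]

theorem norm_sub_sub_fderiv_le_of_lipschitzOnWith {F : Type*} [NormedAddCommGroup F]
    [NormedSpace ℝ F] {f : F → E} {s : Set F} {K : ℝ≥0}
    {z₀ z₁ z₂ : F} {r : ℝ} (hs : Convex ℝ s) (hf : ∀ z ∈ s, DifferentiableAt ℝ f z)
    (hK : LipschitzOnWith K (fderiv ℝ f) s) (hz₀ : z₀ ∈ s)
    (hz₁ : z₁ ∈ s ∩ closedBall z₀ r) (hz₂ : z₂ ∈ s ∩ closedBall z₀ r) :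
    ‖f z₁ - f z₂ - fderiv ℝ f z₀ (z₁ - z₂)‖ ≤ K * r * ‖z₁ - z₂‖ :=
  (hs.inter (convex_closedBall z₀ r)).norm_image_sub_le_of_norm_hasFDerivWithin_le'
    (fun z hz => (hf z hz.1).hasFDerivAt.hasFDerivWithinAt)
    (fun _ hz => (hK.norm_sub_le hz.1 hz₀).trans
      (mul_le_mul_of_nonneg_left (mem_closedBall_iff_norm.1 hz.2) K.2)) hz₂ hz₁

end

section FrozenField

theorem mk_mem_closedBall_diag_iff {E : Type*} [SeminormedAddCommGroup E] {ψ₀ x w : E} {r : ℝ} :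
    (x, w) ∈ closedBall (ψ₀, ψ₀) r ↔ ‖x - ψ₀‖ ≤ r ∧ ‖w - ψ₀‖ ≤ r := by
  rw [← closedBall_prod_same, mem_prod, mem_closedBall_iff_norm, mem_closedBall_iff_norm]

variable {E : Type*} [NormedAddCommGroup E] [NormedSpace ℝ E] {G : E × E → E} {ψ₀ : E}
  {t₀ T : ℝ}

theorem norm_sub_le_mul_of_hasDerivAt_frozenField {M : ℝ≥0}
    (hGM : ∀ z ∈ closedBall (ψ₀, ψ₀) 1, ‖G z‖ < M) {x w : ℝ → E}
    (hx : ∀ t, HasDerivAt x (G (x t, w t)) t) (hx₀ : x t₀ = ψ₀)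
    (hw : ∀ t ∈ Ico t₀ T, ‖x t - ψ₀‖ ≤ 1 → ‖w t - ψ₀‖ ≤ 1) (hMT : M * (T - t₀) ≤ 1) :
    ∀ t ∈ Icc t₀ T, ‖x t - ψ₀‖ ≤ M * (t - t₀) := by
  subst hx₀
  exact norm_sub_le_mul_of_norm_deriv_lt zero_le_one hMT (fun t _ => (hx t).hasDerivWithinAt)
    fun t ht hxt => hGM _ (mk_mem_closedBall_diag_iff.2 ⟨hxt, hw t ht hxt⟩)

theorem norm_sub_le_of_hasDerivAt_frozenField {K : ℝ≥0} {r : ℝ}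
    (hG : LipschitzOnWith K G (closedBall (ψ₀, ψ₀) 1)) (hr : r ≤ 1) {x y a b : ℝ → E}
    (hx : ∀ t, HasDerivAt x (G (x t, a t)) t) (hy : ∀ t, HasDerivAt y (G (y t, b t)) t)
    (h₀ : x t₀ = y t₀) (hxa : ∀ t ∈ Ico t₀ T, (x t, a t) ∈ closedBall (ψ₀, ψ₀) r)
    (hyb : ∀ t ∈ Ico t₀ T, (y t, b t) ∈ closedBall (ψ₀, ψ₀) r) :
    ∀ t ∈ Icc t₀ T, ‖x t - y t‖ ≤ K * (2 * r) * (t - t₀) :=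
  norm_sub_le_of_hasDerivWithinAt_comp_lipschitzOnWith hG (p := fun t => (x t, a t))
    (q := fun t => (y t, b t)) (fun t _ => (hx t).hasDerivWithinAt)
    (fun t _ => (hy t).hasDerivWithinAt) h₀
    (fun t ht => closedBall_subset_closedBall hr (hxa t ht))
    (fun t ht => closedBall_subset_closedBall hr (hyb t ht))
    fun t ht => (dist_triangle_right _ _ (ψ₀, ψ₀)).trans
      (by linarith [mem_closedBall.1 (hxa t ht), mem_closedBall.1 (hyb t ht)])

theorem norm_integral_sub_smul_midpoint_le_of_frozenField [CompleteSpace E] {M K : ℝ≥0}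
    (hGM : ∀ z ∈ closedBall (ψ₀, ψ₀) 1, ‖G z‖ < M)
    (hG : LipschitzOnWith K G (closedBall (ψ₀, ψ₀) 1)) {ψ : ℝ → E}
    (hψ : ∀ t, HasDerivAt ψ (G (ψ t, ψ t)) t) (hψ₁ : ∀ t ∈ Icc t₀ T, ‖ψ t - ψ₀‖ ≤ 1)
    (hT : t₀ ≤ T) :
    ‖(∫ t in t₀..T, ψ t) - (T - t₀) • ψ ((t₀ + T) / 2)‖ ≤ K * M * (T - t₀) ^ 3 / 4 := by
  have hmaps : MapsTo (fun t => (ψ t, ψ t)) (Icc t₀ T) (closedBall (ψ₀, ψ₀) 1) :=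
    fun t ht => mk_mem_closedBall_diag_iff.2 ⟨hψ₁ t ht, hψ₁ t ht⟩
  have hψM : LipschitzOnWith M ψ (Icc t₀ T) :=
    (convex_Icc t₀ T).lipschitzOnWith_of_nnnorm_hasDerivWithin_le
      (fun t _ => (hψ t).hasDerivWithinAt) fun t ht => (hGM _ (hmaps ht)).le
  have hψ' := hG.comp (hψM.prodMk hψM) hmaps
  rw [max_self] at hψ'
  exact_mod_cast norm_integral_sub_smul_midpoint_le hT (fun t _ => (hψ t).hasDerivWithinAt) hψ'

theorem norm_frozenField_sub_sub_fderiv_inr_le {K : ℝ≥0} {r : ℝ}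
    (hGd : ∀ z ∈ closedBall (ψ₀, ψ₀) 1, DifferentiableAt ℝ G z)
    (hG' : LipschitzOnWith K (fderiv ℝ G) (closedBall (ψ₀, ψ₀) 1)) (hr : r ≤ 1) {x y w : E}
    (hx : ‖x - ψ₀‖ ≤ r) (hy : ‖y - ψ₀‖ ≤ r) (hw : ‖w - ψ₀‖ ≤ r) :
    ‖G (x, x) - G (y, w) - (fderiv ℝ G (ψ₀, ψ₀) ∘L ContinuousLinearMap.inr ℝ E E) (x - w)‖
      ≤ K * r * (2 * r) + ‖fderiv ℝ G (ψ₀, ψ₀)‖ * ‖x - y‖ := by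
  set A := fderiv ℝ G (ψ₀, ψ₀)
  have h₁ : (x, x) ∈ closedBall (ψ₀, ψ₀) r := mk_mem_closedBall_diag_iff.2 ⟨hx, hx⟩
  have h₂ : (y, w) ∈ closedBall (ψ₀, ψ₀) r := mk_mem_closedBall_diag_iff.2 ⟨hy, hw⟩
  have hS : ∀ {z}, z ∈ closedBall (ψ₀, ψ₀) r → z ∈ closedBall (ψ₀, ψ₀) 1 ∩ closedBall (ψ₀, ψ₀) r :=
    fun hz => ⟨closedBall_subset_closedBall hr hz, hz⟩
  have htaylor := norm_sub_sub_fderiv_le_of_lipschitzOnWith (convex_closedBall _ _) hGd hG'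
    (mem_closedBall_self zero_le_one) (hS h₁) (hS h₂)
  have hdist : ‖(x, x) - (y, w)‖ ≤ 2 * r := by
    rw [← dist_eq_norm]
    linarith [dist_triangle_right (x, x) (y, w) (ψ₀, ψ₀), mem_closedBall.1 h₁, mem_closedBall.1 h₂]
  have hsplit : G (x, x) - G (y, w) - (A ∘L ContinuousLinearMap.inr ℝ E E) (x - w)
      = (G (x, x) - G (y, w) - A ((x, x) - (y, w))) + A (x - y, 0) := by
    have : (x, x) - (y, w) = (x - y, 0) + ContinuousLinearMap.inr ℝ E E (x - w) := by
      ext <;> simp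
    rw [this, map_add, ContinuousLinearMap.comp_apply]
    abel
  rw [hsplit]
  refine (norm_add_le _ _).trans (add_le_add (htaylor.trans
    (mul_le_mul_of_nonneg_left hdist (mul_nonneg K.2 ((norm_nonneg _).trans hx)))) ?_)
  simpa using A.le_opNorm (x - y, 0)

theorem norm_sub_le_of_midpoint_frozenField [CompleteSpace E] {M K₁ K₂ : ℝ≥0} {r ε : ℝ}
    (hGd : Differentiable ℝ G) (hGM : ∀ z ∈ closedBall (ψ₀, ψ₀) 1, ‖G z‖ < M)
    (hG : LipschitzOnWith K₁ G (closedBall (ψ₀, ψ₀) 1))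
    (hG' : LipschitzOnWith K₂ (fderiv ℝ G) (closedBall (ψ₀, ψ₀) 1)) (hr : r ≤ 1) (hT : t₀ ≤ T)
    {ψ y : ℝ → E} {w : E} (hψ : ∀ t, HasDerivAt ψ (G (ψ t, ψ t)) t)
    (hy : ∀ t, HasDerivAt y (G (y t, w)) t) (hψ₀ : ψ t₀ = ψ₀) (hy₀ : y t₀ = ψ₀)
    (hψr : ∀ t ∈ Icc t₀ T, ‖ψ t - ψ₀‖ ≤ r) (hyr : ∀ t ∈ Icc t₀ T, ‖y t - ψ₀‖ ≤ r)
    (hw : ‖w - ψ₀‖ ≤ r) (hε : ‖ψ ((t₀ + T) / 2) - w‖ ≤ ε) :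
    ‖ψ T - y T‖ ≤ (K₂ * r * (2 * r) + ‖fderiv ℝ G (ψ₀, ψ₀)‖ * (K₁ * (2 * r) * (T - t₀))) * (T - t₀)
      + ‖fderiv ℝ G (ψ₀, ψ₀) ∘L ContinuousLinearMap.inr ℝ E E‖
        * (K₁ * M * (T - t₀) ^ 3 / 4 + (T - t₀) * ε) := by
  set A := fderiv ℝ G (ψ₀, ψ₀)
  set B := A ∘L ContinuousLinearMap.inr ℝ E E
  set m := (t₀ + T) / 2
  have hr₀ : 0 ≤ r := (norm_nonneg _).trans hw
  have hψy : ∀ t ∈ Icc t₀ T, ‖ψ t - y t‖ ≤ K₁ * (2 * r) * (T - t₀) := fun t ht =>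
    (norm_sub_le_of_hasDerivAt_frozenField hG hr hψ hy (hψ₀.trans hy₀.symm)
      (fun s hs => mk_mem_closedBall_diag_iff.2
        ⟨hψr s (Ico_subset_Icc_self hs), hψr s (Ico_subset_Icc_self hs)⟩)
      (fun s hs => mk_mem_closedBall_diag_iff.2 ⟨hyr s (Ico_subset_Icc_self hs), hw⟩) t ht).trans
      (by gcongr; exact ht.2)
  have hlin : ∀ t ∈ uIoc t₀ T, ‖G (ψ t, ψ t) - G (y t, w) - B (ψ t - w)‖
      ≤ K₂ * r * (2 * r) + ‖A‖ * (K₁ * (2 * r) * (T - t₀)) := fun t ht => by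
    rw [uIoc_of_le hT] at ht
    have ht := Ioc_subset_Icc_self ht
    exact (norm_frozenField_sub_sub_fderiv_inr_le (fun z _ => hGd z) hG' hr (hψr t ht)
      (hyr t ht) hw).trans (by gcongr; exact hψy t ht)
  have hmid := norm_integral_sub_smul_midpoint_le_of_frozenField hGM hG hψ
    (fun t ht => (hψr t ht).trans hr) hT
  have hψc : Continuous ψ := continuous_iff_continuousAt.2 fun t => (hψ t).continuousAt
  have hyc : Continuous y := continuous_iff_continuousAt.2 fun t => (hy t).continuousAt
  have hGc := hGd.continuous
  rw [sub_eq_integral_sub_add_clm_integral B w hψ hy (by fun_prop) (by fun_prop)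
    (hψ₀.trans hy₀.symm), show (∫ t in t₀..T, ψ t) - (T - t₀) • w
      = ((∫ t in t₀..T, ψ t) - (T - t₀) • ψ m) + (T - t₀) • (ψ m - w) by rw [smul_sub]; abel]
  refine (norm_add_le _ _).trans (add_le_add ?_ ?_)
  · simpa [abs_of_nonneg (sub_nonneg.2 hT)]
      using intervalIntegral.norm_integral_le_of_norm_le_const hlin
  · refine (B.le_opNorm _).trans (mul_le_mul_of_nonneg_left ((norm_add_le _ _).trans
      (add_le_add hmid ?_)) (norm_nonneg _))
    rw [norm_smul, Real.norm_of_nonneg (sub_nonneg.2 hT)]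
    exact mul_le_mul_of_nonneg_left hε (sub_nonneg.2 hT)

theorem exists_cubic_bound_of_midpoint_frozenField [ProperSpace E] (hG : ContDiff ℝ 2 G)
    {ψ ψt1 : ℝ → E} {ψt2 : ℝ → ℝ → E}
    (hψ : ∀ t, HasDerivAt ψ (G (ψ t, ψ t)) t) (hψ₀ : ψ t₀ = ψ₀)
    (hψt1 : ∀ t, HasDerivAt ψt1 (G (ψt1 t, ψ₀)) t) (hψt1₀ : ψt1 t₀ = ψ₀)
    (hψt2 : ∀ Δt t, HasDerivAt (ψt2 Δt) (G (ψt2 Δt t, ψt1 (t₀ + Δt / 2))) t)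
    (hψt2₀ : ∀ Δt, ψt2 Δt t₀ = ψ₀) :
    ∃ C > 0, ∃ δ > 0, ∀ Δt ∈ Ioo (0 : ℝ) δ,
      ‖ψ (t₀ + Δt) - ψt2 Δt (t₀ + Δt)‖ ≤ C * Δt ^ 3 := by
  have hS : IsCompact (closedBall (ψ₀, ψ₀) (1 : ℝ)) := isCompact_closedBall _ _
  obtain ⟨C₀, hC₀⟩ := hS.exists_bound_of_continuousOn hG.continuous.continuousOn
  set M : ℝ≥0 := C₀.toNNReal + 1
  have hGM : ∀ z ∈ closedBall (ψ₀, ψ₀) 1, ‖G z‖ < M := fun z hz =>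
    (hC₀ z hz).trans_lt (by push_cast [M]; linarith [C₀.le_coe_toNNReal])
  obtain ⟨K₁, hK₁⟩ :=
    (hG.of_le one_le_two).locallyLipschitz.locallyLipschitzOn.exists_lipschitzOnWith_of_compact hS
  obtain ⟨K₂, hK₂⟩ := (hG.fderiv_right (m := 1) le_rfl).locallyLipschitz.locallyLipschitzOn
    |>.exists_lipschitzOnWith_of_compact hS
  set C := 2 * K₂ * M ^ 2 + 2 * ‖fderiv ℝ G (ψ₀, ψ₀)‖ * K₁ * M
    + 5 / 4 * ‖fderiv ℝ G (ψ₀, ψ₀) ∘L ContinuousLinearMap.inr ℝ E E‖ * K₁ * M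
  refine ⟨C + 1, by positivity, 1 / M, by positivity, fun Δt ⟨hΔt₀, hΔtδ⟩ => ?_⟩
  have hMΔt : M * Δt ≤ 1 := by
    rw [lt_div_iff₀ (by positivity)] at hΔtδ; linarith
  have hball : ∀ {x w : ℝ → E}, (∀ t, HasDerivAt x (G (x t, w t)) t) → x t₀ = ψ₀ →
      (∀ t ∈ Ico t₀ (t₀ + Δt), ‖x t - ψ₀‖ ≤ 1 → ‖w t - ψ₀‖ ≤ 1) →
      ∀ t ∈ Icc t₀ (t₀ + Δt), ‖x t - ψ₀‖ ≤ M * Δt := fun hx hx₀ hw t ht =>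
    (norm_sub_le_mul_of_hasDerivAt_frozenField hGM hx hx₀ hw (by simpa using hMΔt) t ht).trans
      (by gcongr; linarith [ht.2])
  have hψr := hball hψ hψ₀ fun _ _ h => h
  have hψt1r := hball hψt1 hψt1₀ fun _ _ _ => by simp
  have hw := hψt1r (t₀ + Δt / 2) ⟨by linarith, by linarith⟩
  have hψt2r := hball (hψt2 Δt) (hψt2₀ Δt) fun _ _ _ => hw.trans hMΔt
  have hsub : Ico t₀ (t₀ + Δt / 2) ⊆ Icc t₀ (t₀ + Δt) := fun t ht => ⟨ht.1, by linarith [ht.2]⟩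
  have hε := norm_sub_le_of_hasDerivAt_frozenField hK₁ hMΔt hψ hψt1
    (hψ₀.trans hψt1₀.symm)
    (fun t ht => mk_mem_closedBall_diag_iff.2 ⟨hψr t (hsub ht), hψr t (hsub ht)⟩)
    (fun t ht => mk_mem_closedBall_diag_iff.2 ⟨hψt1r t (hsub ht), by simp; positivity⟩)
    (t₀ + Δt / 2) ⟨by linarith, le_rfl⟩
  have hε' : ‖ψ ((t₀ + (t₀ + Δt)) / 2) - ψt1 (t₀ + Δt / 2)‖ ≤ K₁ * M * Δt ^ 2 := by
    rw [show (t₀ + (t₀ + Δt)) / 2 = t₀ + Δt / 2 by ring]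
    exact hε.trans_eq (by ring)
  have key := norm_sub_le_of_midpoint_frozenField (hG.differentiable two_ne_zero) hGM hK₁ hK₂
    hMΔt (by linarith) hψ (hψt2 Δt) hψ₀ (hψt2₀ Δt) hψr hψt2r hw hε'
  calc _ ≤ _ := key
    _ = C * Δt ^ 3 := by simp only [add_sub_cancel_left, C]; ring
    _ ≤ (C + 1) * Δt ^ 3 := by gcongr; linarith

end FrozenField

theorem predicted_midpoint_field_second_order_general
    {n m : ℕ}
    (Ψ : (Fin n → ℝ) → (Fin m → ℝ) → (Fin n → ℝ))
    (Υ : (Fin n → ℝ) → (Fin m → ℝ))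
    (hΨ : ContDiff ℝ 3 (Function.uncurry Ψ))
    (hΥ : ContDiff ℝ 3 Υ)
    (ψ ψt1 : ℝ → (Fin n → ℝ)) (ψt2 : ℝ → ℝ → (Fin n → ℝ))
    (t₀ : ℝ) (ψ₀ : Fin n → ℝ)
    (hψ : ∀ t, HasDerivAt ψ (Ψ (ψ t) (Υ (ψ t))) t)
    (hψ0 : ψ t₀ = ψ₀)
    (hψt1 : ∀ t, HasDerivAt ψt1 (Ψ (ψt1 t) (Υ ψ₀)) t)
    (hψt10 : ψt1 t₀ = ψ₀)
    (hψt2 : ∀ Δt t,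
      HasDerivAt (ψt2 Δt) (Ψ (ψt2 Δt t) (Υ (ψt1 (t₀ + Δt / 2)))) t)
    (hψt20 : ∀ Δt, ψt2 Δt t₀ = ψ₀) :
    ∃ C > 0, ∃ δ > 0, ∀ Δt ∈ Set.Ioo (0:ℝ) δ,
      ‖ψ (t₀ + Δt) - ψt2 Δt (t₀ + Δt)‖ ≤ C * Δt ^ 3 :=
  exists_cubic_bound_of_midpoint_frozenField (G := fun z => Ψ z.1 (Υ z.2))
    ((hΨ.of_le (by norm_num)).comp
      (contDiff_fst.prodMk ((hΥ.of_le (by norm_num)).comp contDiff_snd)))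
    hψ hψ0 hψt1 hψt10 hψt2 hψt20

/-- Second-order accuracy is preserved when the exact midpoint field `φ_{1/2}`
is replaced by the predicted field `φ̃_{1/2} = Υ(ψ̃₁(t₀+Δt/2))`, where `ψ̃₁` is
the first-order frozen-field approximation: the resulting `ψ̃₂` still satisfies
`ψ(t₀+Δt) − ψ̃₂(t₀+Δt) = O(Δt³)`. -/
theorem predicted_midpoint_field_second_order
    {n m : ℕ}
    (Ψ : (Fin n → ℝ) → (Fin m → ℝ) → (Fin n → ℝ))
    (Υ : (Fin n → ℝ) → (Fin m → ℝ))
    (hΨ : ContDiff ℝ 3 (Function.uncurry Ψ))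
    (hΥ : ContDiff ℝ 3 Υ)
    (L : ℝ) (hL : 0 ≤ L)
    (hΥLip : ∀ x y : Fin n → ℝ, ‖Υ x - Υ y‖ ≤ L * ‖x - y‖)
    (ψ ψt1 : ℝ → (Fin n → ℝ)) (ψt2 : ℝ → ℝ → (Fin n → ℝ))
    (t₀ : ℝ) (ψ₀ : Fin n → ℝ)
    (hψ : ∀ t, HasDerivAt ψ (Ψ (ψ t) (Υ (ψ t))) t)
    (hψ0 : ψ t₀ = ψ₀)
    (hψt1 : ∀ t, HasDerivAt ψt1 (Ψ (ψt1 t) (Υ ψ₀)) t)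
    (hψt10 : ψt1 t₀ = ψ₀)
    (hψt2 : ∀ Δt t,
      HasDerivAt (ψt2 Δt) (Ψ (ψt2 Δt t) (Υ (ψt1 (t₀ + Δt / 2)))) t)
    (hψt20 : ∀ Δt, ψt2 Δt t₀ = ψ₀) :
    ∃ C > 0, ∃ δ > 0, ∀ Δt ∈ Set.Ioo (0:ℝ) δ,
      ‖ψ (t₀ + Δt) - ψt2 Δt (t₀ + Δt)‖ ≤ C * Δt ^ 3 :=
  predicted_midpoint_field_second_order_general Ψ Υ hΨ hΥ ψ ψt1 ψt2 t₀ ψ₀ hψ hψ0 hψt1 hψt10 hψt2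
    hψt20
end
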